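/- Let E : ℝ^D → ℝ be smooth and θ₀ ∈ ℝ^D. Then there exist C > 0 and h₀ > 0 such that for every h ∈ (0, h₀) and every solution φ : [0, h] → ℝ^D of the initial-condition-dependent flow φ′(t) = −∇E(φ(t)) − (h/2) ∇²E(θ₀)[∇E(φ(t))] with φ(0) = θ₀, one has ‖φ(h) − (θ₀ − h∇E(θ₀))‖ ≤ C h³; i.e. this flow, whose first-order correction freezes the Hessian at the initial parameters θ₀, also follows one gradient descent step with error of order O(h³). -/

import Mathlib

set_option maxHeartbeats 1000000

/-- One gradient descent step follows the initial-condition-dependent flow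
`φ' = −∇E(φ) − (h/2) ∇²E(θ₀)[∇E(φ)]` (Hessian frozen at `θ₀`) with error `O(h³)`. -/
theorem gd_follows_frozen_hessian_flow {D : ℕ}
    (E : EuclideanSpace ℝ (Fin D) → ℝ) (hE : ContDiff ℝ (⊤ : ℕ∞) E)
    (θ₀ : EuclideanSpace ℝ (Fin D)) :
    ∃ C > (0 : ℝ), ∃ h₀ > (0 : ℝ), ∀ h ∈ Set.Ioo (0 : ℝ) h₀,
      ∀ φ : ℝ → EuclideanSpace ℝ (Fin D),
        φ 0 = θ₀ →
        (∀ t ∈ Set.Icc (0 : ℝ) h,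
          HasDerivAt φ
            (-(gradient E (φ t))
              - (h / 2) • fderiv ℝ (gradient E) θ₀ (gradient E (φ t))) t) →
        ‖φ h - (θ₀ - h • gradient E θ₀)‖ ≤ C * h ^ 3 := by
  classical
  set g : EuclideanSpace ℝ (Fin D) → EuclideanSpace ℝ (Fin D) := gradient E with hgdef
  have hg : ContDiff ℝ (⊤ : ℕ∞) g := by
    have h1 : ContDiff ℝ (⊤ : ℕ∞) (fun x => fderiv ℝ E x) := hE.fderiv_right (by simp)
    exact ((InnerProductSpace.toDual ℝ (EuclideanSpace ℝ (Fin D))).symm.contDiff).comp h1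
  set A : EuclideanSpace ℝ (Fin D) →L[ℝ] EuclideanSpace ℝ (Fin D) := fderiv ℝ g θ₀ with hAdef
  have hg1 : ContDiff ℝ (⊤ : ℕ∞) (fderiv ℝ g) := hg.fderiv_right (by simp)
  have hg2 : ContDiff ℝ (⊤ : ℕ∞) (fderiv ℝ (fderiv ℝ g)) := hg1.fderiv_right (by simp)
  set Bl : Set (EuclideanSpace ℝ (Fin D)) := Metric.closedBall θ₀ 1 with hBldef
  have hBc : IsCompact Bl := isCompact_closedBall θ₀ 1
  have hθBl : θ₀ ∈ Bl := Metric.mem_closedBall_self zero_le_one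
  obtain ⟨M₀, hM₀⟩ := hBc.exists_bound_of_continuousOn hg.continuous.continuousOn
  obtain ⟨M₁, hM₁⟩ := hBc.exists_bound_of_continuousOn hg1.continuous.continuousOn
  have hc2 : ContinuousOn (fderiv ℝ (fderiv ℝ g)) Bl := hg2.continuous.continuousOn
  obtain ⟨M₂, hM₂⟩ := hBc.exists_bound_of_continuousOn
    (E := EuclideanSpace ℝ (Fin D) →L[ℝ] EuclideanSpace ℝ (Fin D) →L[ℝ] EuclideanSpace ℝ (Fin D)) hc2
  set M : ℝ := max 1 (max M₀ (max M₁ M₂)) with hMdef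
  have hM1 : (1 : ℝ) ≤ M := le_max_left _ _
  have hMpos : (0 : ℝ) < M := lt_of_lt_of_le one_pos hM1
  have hgB : ∀ x ∈ Bl, ‖g x‖ ≤ M := fun x hx =>
    (hM₀ x hx).trans ((le_max_left _ _).trans (le_max_right _ _))
  have hdB : ∀ x ∈ Bl, ‖fderiv ℝ g x‖ ≤ M := fun x hx =>
    (hM₁ x hx).trans (((le_max_left _ _).trans (le_max_right _ _)).trans (le_max_right _ _))
  have hddB : ∀ x ∈ Bl, ‖fderiv ℝ (fderiv ℝ g) x‖ ≤ M := fun x hx =>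
    (hM₂ x hx).trans (((le_max_right _ _).trans (le_max_right _ _)).trans (le_max_right _ _))
  have hAnorm : ‖A‖ ≤ M := hdB θ₀ hθBl
  -- g is M-Lipschitz on Bl
  have hglip : ∀ x ∈ Bl, ∀ y ∈ Bl, ‖g y - g x‖ ≤ M * ‖y - x‖ := fun x hx y hy =>
    (convex_closedBall θ₀ 1).norm_image_sub_le_of_norm_fderiv_le
      (fun z _ => hg.differentiable (by simp) z) hdB hx hy
  -- fderiv g is M-Lipschitz from θ₀ on Bl
  have hdlip : ∀ x ∈ Bl, ‖fderiv ℝ g x - A‖ ≤ M * ‖x - θ₀‖ := fun x hx =>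
    (convex_closedBall θ₀ 1).norm_image_sub_le_of_norm_fderiv_le
      (fun z _ => hg1.differentiable (by simp) z) hddB hθBl hx
  -- Taylor remainder bound
  have hTay : ∀ y : EuclideanSpace ℝ (Fin D), ‖y - θ₀‖ ≤ 1 →
      ‖g y - g θ₀ - A (y - θ₀)‖ ≤ M * ‖y - θ₀‖ * ‖y - θ₀‖ := by
    intro y hy
    have hsub : Metric.closedBall θ₀ ‖y - θ₀‖ ⊆ Bl := Metric.closedBall_subset_closedBall hy
    have hb : ∀ z ∈ Metric.closedBall θ₀ ‖y - θ₀‖, ‖fderiv ℝ g z - A‖ ≤ M * ‖y - θ₀‖ := by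
      intro z hz
      have h1 := hdlip z (hsub hz)
      have h2 : ‖z - θ₀‖ ≤ ‖y - θ₀‖ := by
        simpa [Metric.mem_closedBall, dist_eq_norm] using hz
      nlinarith
    have hmem : y ∈ Metric.closedBall θ₀ ‖y - θ₀‖ := by
      simp [Metric.mem_closedBall, dist_eq_norm]
    have := (convex_closedBall θ₀ ‖y - θ₀‖).norm_image_sub_le_of_norm_fderiv_le'
      (fun z _ => hg.differentiable (by simp) z) hb (Metric.mem_closedBall_self (norm_nonneg _)) hmem
    nlinarith [this, norm_nonneg (y - θ₀), norm_nonneg (g y - g θ₀ - A (y - θ₀))]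
  refine ⟨8 * M ^ 5, by positivity, 1 / (4 * M ^ 2), by positivity, ?_⟩
  intro h hh φ hφ0 hφ'
  obtain ⟨hh0, hhu⟩ := hh
  have h4M : (1 : ℝ) ≤ 4 * M ^ 2 := by nlinarith
  have hh1 : h ≤ 1 := hhu.le.trans (by
    rw [div_le_one (by positivity)]; exact h4M)
  have hMh : 2 * M ^ 2 * h < 1 / 2 := by
    have h1 : 2 * M ^ 2 * h < 2 * M ^ 2 * (1 / (4 * M ^ 2)) := by
      apply mul_lt_mul_of_pos_left hhu (by positivity)
    have h2 : 2 * M ^ 2 * (1 / (4 * M ^ 2)) = 1 / 2 := by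
      field_simp; ring
    linarith
  -- speed bound while in the ball
  have hspeed : ∀ t, ‖φ t - θ₀‖ ≤ 1 →
      ‖-(g (φ t)) - (h / 2) • A (g (φ t))‖ ≤ 2 * M ^ 2 := by
    intro t hmem
    have hB' : φ t ∈ Bl := by
      simpa [hBldef, Metric.mem_closedBall, dist_eq_norm] using hmem
    have h1 : ‖g (φ t)‖ ≤ M := hgB _ hB'
    have h2 : ‖A (g (φ t))‖ ≤ M * M :=
      (A.le_opNorm _).trans (by nlinarith [norm_nonneg (g (φ t))])
    have h3 : ‖-(g (φ t)) - (h / 2) • A (g (φ t))‖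
        ≤ ‖g (φ t)‖ + (h / 2) * ‖A (g (φ t))‖ := by
      refine (norm_sub_le _ _).trans ?_
      rw [norm_neg, norm_smul]
      have : ‖(h / 2 : ℝ)‖ = h / 2 := by
        rw [Real.norm_eq_abs, abs_of_nonneg (by linarith)]
      rw [this]
    nlinarith [norm_nonneg (A (g (φ t))), norm_nonneg (g (φ t))]
  -- Claim 1: φ stays within distance 1/2 of θ₀
  have claim1 : ∀ t ∈ Set.Icc (0 : ℝ) h, ‖φ t - θ₀‖ ≤ 1 / 2 := by
    by_contra hcon
    push_neg at hcon
    obtain ⟨t₁, ht₁, ht₁'⟩ := hcon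
    have hφcont : ContinuousOn φ (Set.Icc 0 h) := fun t ht =>
      (hφ' t ht).continuousAt.continuousWithinAt
    set S : Set ℝ := Set.Icc 0 h ∩ φ ⁻¹' {x | 1 / 2 ≤ ‖x - θ₀‖} with hSdef
    have hSne : S.Nonempty := ⟨t₁, ht₁, ht₁'.le⟩
    have hSclosed : IsClosed S := by
      apply hφcont.preimage_isClosed_of_isClosed isClosed_Icc
      exact isClosed_le continuous_const (by fun_prop)
    have hbdd : BddBelow S := ⟨0, fun x hx => hx.1.1⟩
    have huS : sInf S ∈ S := hSclosed.csInf_mem hSne hbdd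
    set u := sInf S with hudef
    have hu0 : 0 < u := by
      rcases lt_or_eq_of_le huS.1.1 with hlt | heq
      · exact hlt
      · exfalso
        have h2 := huS.2
        rw [← heq] at h2
        simp only [Set.mem_preimage, Set.mem_setOf_eq, hφ0, sub_self, norm_zero] at h2
        linarith
    have hIcc : Set.Icc (0 : ℝ) u ⊆ Set.Icc 0 h := Set.Icc_subset_Icc le_rfl huS.1.2
    have hder : ∀ s ∈ Set.Icc (0 : ℝ) u,
        HasDerivWithinAt φ (-(g (φ s)) - (h / 2) • A (g (φ s))) (Set.Icc 0 u) s :=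
      fun s hs => (hφ' s (hIcc hs)).hasDerivWithinAt
    have hbound : ∀ s ∈ Set.Ico (0 : ℝ) u,
        ‖-(g (φ s)) - (h / 2) • A (g (φ s))‖ ≤ 2 * M ^ 2 := by
      intro s hs
      apply hspeed s
      have hsnot : s ∉ S := fun hmem => absurd (csInf_le hbdd hmem) (not_le.mpr hs.2)
      have hle : ¬(1 / 2 ≤ ‖φ s - θ₀‖) := fun hle => hsnot ⟨hIcc ⟨hs.1, hs.2.le⟩, hle⟩
      linarith [not_le.mp hle]
    have hu_mem : u ∈ Set.Icc (0 : ℝ) u := Set.right_mem_Icc.mpr hu0.le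
    have hfin := norm_image_sub_le_of_norm_deriv_le_segment' hder hbound u hu_mem
    rw [hφ0] at hfin
    have hub : ‖φ u - θ₀‖ ≤ 2 * M ^ 2 * h := by
      have : u - 0 ≤ h := by linarith [huS.1.2]
      nlinarith [norm_nonneg (φ u - θ₀)]
    have := huS.2
    simp only [Set.mem_preimage, Set.mem_setOf_eq] at this
    linarith
  -- Claim 2: refined distance bound
  have claim2 : ∀ t ∈ Set.Icc (0 : ℝ) h, ‖φ t - θ₀‖ ≤ 2 * M ^ 2 * t := by
    have hder : ∀ s ∈ Set.Icc (0 : ℝ) h,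
        HasDerivWithinAt φ (-(g (φ s)) - (h / 2) • A (g (φ s))) (Set.Icc 0 h) s :=
      fun s hs => (hφ' s hs).hasDerivWithinAt
    have hbound : ∀ s ∈ Set.Ico (0 : ℝ) h,
        ‖-(g (φ s)) - (h / 2) • A (g (φ s))‖ ≤ 2 * M ^ 2 := fun s hs =>
      hspeed s (by linarith [claim1 s ⟨hs.1, hs.2.le⟩])
    intro t ht
    have := norm_image_sub_le_of_norm_deriv_le_segment' hder hbound t ht
    rw [hφ0] at this
    simpa using this
  have hφBl : ∀ t ∈ Set.Icc (0 : ℝ) h, φ t ∈ Bl := by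
    intro t ht
    have := claim1 t ht
    simp only [hBldef, Metric.mem_closedBall, dist_eq_norm]
    linarith
  -- Stage 2: crude bound on ψ t = φ t + t • g θ₀ - θ₀
  have hψ' : ∀ t ∈ Set.Icc (0 : ℝ) h,
      HasDerivAt (fun s => φ s + s • g θ₀ - θ₀)
        ((-(g (φ t)) - (h / 2) • A (g (φ t))) + g θ₀) t := by
    intro t ht
    have h1 := ((hφ' t ht).add ((hasDerivAt_id t).smul_const (g θ₀))).sub_const θ₀
    simpa [one_smul] using h1
  have hψbound : ∀ t ∈ Set.Icc (0 : ℝ) h,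
      ‖(-(g (φ t)) - (h / 2) • A (g (φ t))) + g θ₀‖ ≤ 3 * M ^ 3 * h := by
    intro t ht
    have hB' : φ t ∈ Bl := hφBl t ht
    have e1 : (-(g (φ t)) - (h / 2) • A (g (φ t))) + g θ₀
        = -(g (φ t) - g θ₀) - (h / 2) • A (g (φ t)) := by abel
    rw [e1]
    have h1 : ‖g (φ t) - g θ₀‖ ≤ M * ‖φ t - θ₀‖ := hglip θ₀ hθBl (φ t) hB'
    have h2 : ‖φ t - θ₀‖ ≤ 2 * M ^ 2 * t := claim2 t ht
    have h3 : ‖A (g (φ t))‖ ≤ M * M :=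
      (A.le_opNorm _).trans (by nlinarith [norm_nonneg (g (φ t)), hgB _ hB'])
    have h4 : ‖-(g (φ t) - g θ₀) - (h / 2) • A (g (φ t))‖
        ≤ ‖g (φ t) - g θ₀‖ + (h / 2) * ‖A (g (φ t))‖ := by
      refine (norm_sub_le _ _).trans ?_
      rw [norm_neg, norm_smul, Real.norm_eq_abs, abs_of_nonneg (by linarith : (0:ℝ) ≤ h / 2)]
    have ht1 : t ≤ h := ht.2
    have ht0 : 0 ≤ t := ht.1
    have k1 : M * ‖φ t - θ₀‖ ≤ M * (2 * M ^ 2 * t) := mul_le_mul_of_nonneg_left h2 hMpos.le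
    have k2 : 2 * M ^ 3 * t ≤ 2 * M ^ 3 * h :=
      mul_le_mul_of_nonneg_left ht1 (by positivity)
    have k3 : h / 2 * ‖A (g (φ t))‖ ≤ h / 2 * (M * M) :=
      mul_le_mul_of_nonneg_left h3 (by linarith)
    have k4 : (0 : ℝ) ≤ (M - 1) * M ^ 2 * h :=
      mul_nonneg (mul_nonneg (by linarith) (by positivity)) hh0.le
    have k5 : (0 : ℝ) ≤ M ^ 2 * h := by positivity
    nlinarith [h1, k1, k2, k3, k4, k5]
  have hψle : ∀ t ∈ Set.Icc (0 : ℝ) h, ‖φ t + t • g θ₀ - θ₀‖ ≤ 3 * M ^ 3 * h * t := by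
    have hder : ∀ s ∈ Set.Icc (0 : ℝ) h,
        HasDerivWithinAt (fun s => φ s + s • g θ₀ - θ₀)
          ((-(g (φ s)) - (h / 2) • A (g (φ s))) + g θ₀) (Set.Icc 0 h) s :=
      fun s hs => (hψ' s hs).hasDerivWithinAt
    intro t ht
    have := norm_image_sub_le_of_norm_deriv_le_segment' hder
      (fun s hs => hψbound s ⟨hs.1, hs.2.le⟩) t ht
    simp only [hφ0, zero_smul, add_zero, sub_self, sub_zero] at this
    exact this
  -- Stage 3: corrected function χ
  have hχ' : ∀ t ∈ Set.Icc (0 : ℝ) h,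
      HasDerivAt (fun s => (φ s + s • g θ₀ - θ₀) - (s ^ 2 / 2 - h * s / 2) • A (g θ₀))
        (((-(g (φ t)) - (h / 2) • A (g (φ t))) + g θ₀) - (t - h / 2) • A (g θ₀)) t := by
    intro t ht
    have hpoly : HasDerivAt (fun s : ℝ => s ^ 2 / 2 - h * s / 2) (t - h / 2) t := by
      have h1 : HasDerivAt (fun s : ℝ => s ^ 2 / 2 - h * s / 2)
          (((2 : ℕ) : ℝ) * t ^ (2 - 1) / 2 - h * 1 / 2) t := ((hasDerivAt_pow 2 t).div_const 2).sub
        (((hasDerivAt_id t).const_mul h).div_const 2)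
      convert h1 using 1
      push_cast
      ring
    exact (hψ' t ht).sub (hpoly.smul_const _)
  have hχbound : ∀ t ∈ Set.Icc (0 : ℝ) h,
      ‖((-(g (φ t)) - (h / 2) • A (g (φ t))) + g θ₀) - (t - h / 2) • A (g θ₀)‖
        ≤ 8 * M ^ 5 * h ^ 2 := by
    intro t ht
    have hB' : φ t ∈ Bl := hφBl t ht
    have ht1 : t ≤ h := ht.2
    have ht0 : 0 ≤ t := ht.1
    have heq : ((-(g (φ t)) - (h / 2) • A (g (φ t))) + g θ₀) - (t - h / 2) • A (g θ₀)
        = -(g (φ t) - g θ₀ - A (φ t - θ₀)) - A (φ t + t • g θ₀ - θ₀)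
          - (h / 2) • (A (g (φ t)) - A (g θ₀)) := by
      have h1 : A (φ t + t • g θ₀ - θ₀) = A (φ t - θ₀) + t • A (g θ₀) := by
        rw [show φ t + t • g θ₀ - θ₀ = (φ t - θ₀) + t • g θ₀ by abel, map_add, map_smul]
      rw [h1]
      module
    rw [heq]
    -- bound each piece
    have hd1 : ‖φ t - θ₀‖ ≤ 2 * M ^ 2 * h := by
      have := claim2 t ht
      nlinarith [norm_nonneg (φ t - θ₀)]
    have hd1' : ‖φ t - θ₀‖ ≤ 1 := by linarith [claim1 t ht]
    have hR : ‖g (φ t) - g θ₀ - A (φ t - θ₀)‖ ≤ M * (2 * M ^ 2 * h) * (2 * M ^ 2 * h) := by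
      have h0 := hTay (φ t) hd1'
      have k1 : ‖φ t - θ₀‖ * ‖φ t - θ₀‖ ≤ (2 * M ^ 2 * h) * (2 * M ^ 2 * h) :=
        mul_le_mul hd1 hd1 (norm_nonneg _) (by positivity)
      have k2 : M * (‖φ t - θ₀‖ * ‖φ t - θ₀‖) ≤ M * ((2 * M ^ 2 * h) * (2 * M ^ 2 * h)) :=
        mul_le_mul_of_nonneg_left k1 hMpos.le
      nlinarith [h0, k2]
    have hAψ : ‖A (φ t + t • g θ₀ - θ₀)‖ ≤ M * (3 * M ^ 3 * h * h) := by
      refine (A.le_opNorm _).trans ?_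
      have h0 := hψle t ht
      have k1 : ‖A‖ * ‖φ t + t • g θ₀ - θ₀‖ ≤ M * (3 * M ^ 3 * h * t) :=
        mul_le_mul hAnorm h0 (norm_nonneg _) hMpos.le
      have k2 : 3 * M ^ 4 * h * t ≤ 3 * M ^ 4 * h * h := by
        apply mul_le_mul_of_nonneg_left ht1 (by positivity)
      nlinarith [k1, k2]
    have h3 : ‖A (g (φ t)) - A (g θ₀)‖ ≤ M * (M * (2 * M ^ 2 * h)) := by
      rw [← map_sub]
      refine (A.le_opNorm _).trans ?_
      have h1 : ‖g (φ t) - g θ₀‖ ≤ M * ‖φ t - θ₀‖ := hglip θ₀ hθBl (φ t) hB'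
      have k0 : ‖g (φ t) - g θ₀‖ ≤ M * (2 * M ^ 2 * h) :=
        h1.trans (mul_le_mul_of_nonneg_left hd1 hMpos.le)
      have k1 : ‖A‖ * ‖g (φ t) - g θ₀‖ ≤ M * (M * (2 * M ^ 2 * h)) :=
        mul_le_mul hAnorm k0 (norm_nonneg _) hMpos.le
      exact k1
    have htri : ‖-(g (φ t) - g θ₀ - A (φ t - θ₀)) - A (φ t + t • g θ₀ - θ₀)
          - (h / 2) • (A (g (φ t)) - A (g θ₀))‖
        ≤ ‖g (φ t) - g θ₀ - A (φ t - θ₀)‖ + ‖A (φ t + t • g θ₀ - θ₀)‖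
          + (h / 2) * ‖A (g (φ t)) - A (g θ₀)‖ := by
      refine (norm_sub_le _ _).trans ?_
      rw [norm_smul, Real.norm_eq_abs, abs_of_nonneg (by linarith : (0:ℝ) ≤ h / 2)]
      have := norm_sub_le (-(g (φ t) - g θ₀ - A (φ t - θ₀))) (A (φ t + t • g θ₀ - θ₀))
      rw [norm_neg] at this
      linarith
    have k3 : h / 2 * ‖A (g (φ t)) - A (g θ₀)‖ ≤ h / 2 * (M * (M * (2 * M ^ 2 * h))) :=
      mul_le_mul_of_nonneg_left h3 (by linarith)
    have k4 : (0 : ℝ) ≤ (M - 1) * M ^ 4 * h ^ 2 :=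
      mul_nonneg (mul_nonneg (by linarith) (by positivity)) (by positivity)
    have k5 : (0 : ℝ) ≤ M ^ 4 * h ^ 2 := by positivity
    nlinarith [htri, hR, hAψ, k3, k4, k5]
  -- conclude via MVT on χ
  have hder : ∀ s ∈ Set.Icc (0 : ℝ) h,
      HasDerivWithinAt (fun s => (φ s + s • g θ₀ - θ₀) - (s ^ 2 / 2 - h * s / 2) • A (g θ₀))
        (((-(g (φ s)) - (h / 2) • A (g (φ s))) + g θ₀) - (s - h / 2) • A (g θ₀))
        (Set.Icc 0 h) s :=
    fun s hs => (hχ' s hs).hasDerivWithinAt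
  have hfin := norm_image_sub_le_of_norm_deriv_le_segment' hder
    (fun s hs => hχbound s ⟨hs.1, hs.2.le⟩) h (Set.right_mem_Icc.mpr hh0.le)
  have hχ0 : (φ 0 + (0:ℝ) • g θ₀ - θ₀) - ((0:ℝ) ^ 2 / 2 - h * 0 / 2) • A (g θ₀) = 0 := by
    simp [hφ0]
  have hχh : (φ h + h • g θ₀ - θ₀) - (h ^ 2 / 2 - h * h / 2) • A (g θ₀)
      = φ h - (θ₀ - h • g θ₀) := by
    have hc : h ^ 2 / 2 - h * h / 2 = 0 := by ring
    rw [hc, zero_smul, sub_zero]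
    abel
  simp only [hχ0, hχh] at hfin
  rw [sub_zero] at hfin
  calc ‖φ h - (θ₀ - h • g θ₀)‖ ≤ 8 * M ^ 5 * h ^ 2 * (h - 0) := hfin
    _ = 8 * M ^ 5 * h ^ 3 := by ring
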